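/- Let I be an open real interval, θ₀ a real constant, a₁, a₂, a₃ : I → ℝ smooth functions, and let α₁, α₂, α₃, α₄ : I → ℝ⁴ satisfy α₁' = a₁α₃, α₂' = a₂α₃, α₃' = −a₁α₁ − a₂α₂ + a₃α₄, α₄' = −a₃α₃ on I, with ⟨αᵢ(v), αⱼ(v)⟩ = δᵢⱼ for all v ∈ I (Euclidean inner product on ℝ⁴). Define ψ(u,v) = cos(u·sinh θ₀)·α₁(v) + sin(u·sinh θ₀)·α₂(v) and φ(u,v) = (u·cosh θ₀, ψ(u,v)) ∈ ℝ × ℝ⁴. Then for all (u,v) ∈ ℝ × I: (i) ⟨ψ(u,v), ψ(u,v)⟩ = 1, so φ takes values in 𝔼¹₁ × 𝕊³; (ii) ∂_u²φ = −sinh²θ₀ · (0, ψ(u,v)), which is normal to 𝔼¹₁ × 𝕊³ inside ℝ × ℝ⁴ at φ(u,v); (iii) ∂_u∂_v φ and ∂_v φ are both scalar multiples of (0, α₃(v)); (iv) g(∂_u φ, ∂_u φ) = −1 and g(∂_u φ, ∂_v φ) = 0. In particular φ parametrizes a time-like surface in 𝔼¹₁ × 𝕊³ whose second fundamental form vanishes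 on the coordinate direction ∂_u, i.e. the surface has positive relative nullity. -/

import Mathlib

/-- The Lorentzian product metric of `𝔼¹₁ × 𝔼⁴ = ℝ × ℝ⁴`:
`g((s₁,y₁),(s₂,y₂)) = -s₁ s₂ + ⟨y₁, y₂⟩`. -/
noncomputable def lorentzMetric (X Y : ℝ × EuclideanSpace ℝ (Fin 4)) : ℝ :=
  -(X.1 * Y.1) + (inner ℝ X.2 Y.2 : ℝ)

/-- Proposition 5.2 of the paper.  With an orthonormal moving frame
`{α₁, α₂, α₃, α₄}` solving the displayed system, the surface
`φ(u,v) = (u cosh θ₀, cos(u sinh θ₀) α₁(v) + sin(u sinh θ₀) α₂(v))` is a time-like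
surface in `𝔼¹₁ × 𝕊³` with positive relative nullity: `ψ` has unit length, `∂u²φ` is
normal to `𝔼¹₁ × 𝕊³` (a multiple of `(0, ψ)`), `∂u∂vφ` and `∂vφ` are multiples of
`(0, α₃)`, and `g(∂uφ, ∂uφ) = -1`, `g(∂uφ, ∂vφ) = 0`. -/
theorem timelike_PRN_surface_in_E11S3 (A B θ₀ : ℝ)
    (a₁ a₂ a₃ : ℝ → ℝ)
    (ha₁ : ContDiffOn ℝ (⊤ : ℕ∞) a₁ (Set.Ioo A B)) (ha₂ : ContDiffOn ℝ (⊤ : ℕ∞) a₂ (Set.Ioo A B))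
    (ha₃ : ContDiffOn ℝ (⊤ : ℕ∞) a₃ (Set.Ioo A B))
    (α₁ α₂ α₃ α₄ : ℝ → EuclideanSpace ℝ (Fin 4))
    (hα₁ : ∀ v ∈ Set.Ioo A B, HasDerivAt α₁ (a₁ v • α₃ v) v)
    (hα₂ : ∀ v ∈ Set.Ioo A B, HasDerivAt α₂ (a₂ v • α₃ v) v)
    (hα₃ : ∀ v ∈ Set.Ioo A B,
      HasDerivAt α₃ (-(a₁ v) • α₁ v + -(a₂ v) • α₂ v + a₃ v • α₄ v) v)
    (hα₄ : ∀ v ∈ Set.Ioo A B, HasDerivAt α₄ (-(a₃ v) • α₃ v) v)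
    (horth : ∀ v ∈ Set.Ioo A B,
      (inner ℝ (α₁ v) (α₁ v) : ℝ) = 1 ∧ (inner ℝ (α₂ v) (α₂ v) : ℝ) = 1 ∧
      (inner ℝ (α₃ v) (α₃ v) : ℝ) = 1 ∧ (inner ℝ (α₄ v) (α₄ v) : ℝ) = 1 ∧
      (inner ℝ (α₁ v) (α₂ v) : ℝ) = 0 ∧ (inner ℝ (α₁ v) (α₃ v) : ℝ) = 0 ∧
      (inner ℝ (α₁ v) (α₄ v) : ℝ) = 0 ∧ (inner ℝ (α₂ v) (α₃ v) : ℝ) = 0 ∧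
      (inner ℝ (α₂ v) (α₄ v) : ℝ) = 0 ∧ (inner ℝ (α₃ v) (α₄ v) : ℝ) = 0)
    (ψ : ℝ → ℝ → EuclideanSpace ℝ (Fin 4))
    (hψ : ∀ u v, ψ u v
      = Real.cos (u * Real.sinh θ₀) • α₁ v + Real.sin (u * Real.sinh θ₀) • α₂ v)
    (φ : ℝ → ℝ → ℝ × EuclideanSpace ℝ (Fin 4))
    (hφ : ∀ u v, φ u v = (u * Real.cosh θ₀, ψ u v)) :
    ∀ u : ℝ, ∀ v ∈ Set.Ioo A B,
      -- (i) `φ` takes values in `𝔼¹₁ × 𝕊³`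
      (inner ℝ (ψ u v) (ψ u v) : ℝ) = 1 ∧
      -- (ii) `∂u²φ` is normal to `𝔼¹₁ × 𝕊³`
      deriv (fun u' => deriv (fun u'' => φ u'' v) u') u
        = (-(Real.sinh θ₀ ^ 2)) • ((0 : ℝ), ψ u v) ∧
      -- (iii) `∂u∂vφ` and `∂vφ` are multiples of `(0, α₃)`
      (∃ c : ℝ, deriv (fun u' => deriv (fun v' => φ u' v') v) u
        = c • ((0 : ℝ), α₃ v)) ∧
      (∃ c : ℝ, deriv (fun v' => φ u v') v = c • ((0 : ℝ), α₃ v)) ∧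
      -- (iv) the surface is time-like
      lorentzMetric (deriv (fun u' => φ u' v) u) (deriv (fun u' => φ u' v) u) = -1 ∧
      lorentzMetric (deriv (fun u' => φ u' v) u) (deriv (fun v' => φ u v') v) = 0 := by
  intro u v hv
  obtain ⟨h11, h22, h33, h44, h12, h13, h14, h23, h24, h34⟩ := horth v hv
  have h21 : (inner ℝ (α₂ v) (α₁ v) : ℝ) = 0 := by rw [real_inner_comm]; exact h12
  set s := Real.sinh θ₀ with hs
  set ch := Real.cosh θ₀ with hch
  -- scalar derivatives
  have hcos : ∀ u' : ℝ, HasDerivAt (fun t => Real.cos (t * s)) (-Real.sin (u' * s) * s) u' := by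
    intro u'
    simpa using ((hasDerivAt_id u').mul_const s).cos
  have hsin : ∀ u' : ℝ, HasDerivAt (fun t => Real.sin (t * s)) (Real.cos (u' * s) * s) u' := by
    intro u'
    simpa using ((hasDerivAt_id u').mul_const s).sin
  -- ∂u ψ
  have hψu : ∀ u' : ℝ, HasDerivAt (fun t => ψ t v)
      ((-Real.sin (u' * s) * s) • α₁ v + (Real.cos (u' * s) * s) • α₂ v) u' := by
    intro u'
    have h := ((hcos u').smul_const (α₁ v)).add ((hsin u').smul_const (α₂ v))
    have he : (fun t => ψ t v)
        = fun t => Real.cos (t * s) • α₁ v + Real.sin (t * s) • α₂ v :=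
      funext fun t => hψ t v
    rw [he]; exact h
  -- ∂u φ
  have hφu : ∀ u' : ℝ, HasDerivAt (fun t => φ t v)
      ((ch, (-Real.sin (u' * s) * s) • α₁ v + (Real.cos (u' * s) * s) • α₂ v)) u' := by
    intro u'
    have he : (fun t => φ t v) = fun t => (t * ch, ψ t v) := funext fun t => hφ t v
    rw [he]
    have h1 : HasDerivAt (fun t : ℝ => t * ch) ch u' := by
      simpa using (hasDerivAt_id u').mul_const ch
    exact h1.prodMk (hψu u')
  have hderivu : (fun u' => deriv (fun t => φ t v) u')
      = fun u' => ((ch, (-Real.sin (u' * s) * s) • α₁ v + (Real.cos (u' * s) * s) • α₂ v) :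
        ℝ × EuclideanSpace ℝ (Fin 4)) :=
    funext fun u' => (hφu u').deriv
  -- ∂v ψ and ∂v φ (for any u', at our fixed v)
  have hψv : ∀ u' : ℝ, HasDerivAt (fun w => ψ u' w)
      ((Real.cos (u' * s) * a₁ v + Real.sin (u' * s) * a₂ v) • α₃ v) v := by
    intro u'
    have he : (fun w => ψ u' w)
        = fun w => Real.cos (u' * s) • α₁ w + Real.sin (u' * s) • α₂ w :=
      funext fun w => hψ u' w
    rw [he]
    have h := ((hα₁ v hv).const_smul (Real.cos (u' * s))).add
      ((hα₂ v hv).const_smul (Real.sin (u' * s)))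
    rw [add_smul, ← smul_smul, ← smul_smul]
    exact h
  have hφv : ∀ u' : ℝ, HasDerivAt (fun w => φ u' w)
      (((0 : ℝ), (Real.cos (u' * s) * a₁ v + Real.sin (u' * s) * a₂ v) • α₃ v)) v := by
    intro u'
    have he : (fun w => φ u' w) = fun w => (u' * ch, ψ u' w) := funext fun w => hφ u' w
    rw [he]
    exact (hasDerivAt_const v (u' * ch)).prodMk (hψv u')
  refine ⟨?_, ?_, ?_, ?_, ?_, ?_⟩
  · -- (i)
    rw [hψ]
    simp only [inner_add_left, inner_add_right, real_inner_smul_left, real_inner_smul_right,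
      h11, h22, h12, h21, mul_one, mul_zero, add_zero, zero_add]
    nlinarith [Real.sin_sq_add_cos_sq (u * s)]
  · -- (ii)
    rw [hderivu]
    have h1 : HasDerivAt (fun t => -Real.sin (t * s) * s) (-(Real.cos (u * s) * s) * s) u :=
      (hsin u).neg.mul_const s
    have h2 : HasDerivAt (fun t => Real.cos (t * s) * s) (-Real.sin (u * s) * s * s) u :=
      (hcos u).mul_const s
    have h : deriv (fun u' => ((ch, (-Real.sin (u' * s) * s) • α₁ v + (Real.cos (u' * s) * s) • α₂ v) :
        ℝ × EuclideanSpace ℝ (Fin 4))) u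
        = (0, (-(Real.cos (u * s) * s) * s) • α₁ v + (-Real.sin (u * s) * s * s) • α₂ v) :=
      ((hasDerivAt_const u ch).prodMk
      ((h1.smul_const (α₁ v)).add (h2.smul_const (α₂ v)))).deriv
    rw [h]
    refine Prod.ext ?_ ?_
    · simp
    · show (-(Real.cos (u * s) * s) * s) • α₁ v + (-Real.sin (u * s) * s * s) • α₂ v
        = (-(s ^ 2)) • ψ u v
      rw [hψ]
      module
  · -- (iii) mixed
    have hd : (fun u' => deriv (fun w => φ u' w) v)
        = fun u' => (((0 : ℝ), (Real.cos (u' * s) * a₁ v + Real.sin (u' * s) * a₂ v) • α₃ v) :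
          ℝ × EuclideanSpace ℝ (Fin 4)) :=
      funext fun u' => (hφv u').deriv
    rw [hd]
    refine ⟨-Real.sin (u * s) * s * a₁ v + Real.cos (u * s) * s * a₂ v, ?_⟩
    have hc : HasDerivAt (fun t => Real.cos (t * s) * a₁ v + Real.sin (t * s) * a₂ v)
        (-Real.sin (u * s) * s * a₁ v + Real.cos (u * s) * s * a₂ v) u :=
      ((hcos u).mul_const (a₁ v)).add ((hsin u).mul_const (a₂ v))
    have h := ((hasDerivAt_const u (0 : ℝ)).prodMk (hc.smul_const (α₃ v))).deriv
    rw [h]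
    refine Prod.ext ?_ ?_
    · simp
    · simp
  · -- (iii) ∂v φ
    exact ⟨Real.cos (u * s) * a₁ v + Real.sin (u * s) * a₂ v, by
      rw [(hφv u).deriv]
      refine Prod.ext ?_ ?_ <;> simp⟩
  · -- (iv) first
    rw [(hφu u).deriv]
    unfold lorentzMetric
    simp only [inner_add_left, inner_add_right, real_inner_smul_left, real_inner_smul_right,
      h11, h22, h12, h21]
    have hc2 : ch ^ 2 = s ^ 2 + 1 := Real.cosh_sq θ₀
    nlinarith [Real.sin_sq_add_cos_sq (u * s)]
  · -- (iv) second
    rw [(hφu u).deriv, (hφv u).deriv]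
    unfold lorentzMetric
    simp only [inner_add_left, real_inner_smul_left, real_inner_smul_right, h13, h23,
      mul_zero, add_zero, neg_zero, zero_add]
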